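/- arXiv:2404.14650 — 2 statements merged into one kernel-verified Lean document; each statement's English description precedes it below -/
import Mathlib

section
/- In the partial group algebra K_par G, for all g_1, ..., g_n ∈ G one has [g_n^{-1}]⋯[g_2^{-1}][g_1^{-1}][g_1][g_2]⋯[g_n] = e_{g_n^{-1}} e_{g_n^{-1} g_{n-1}^{-1}} ⋯ e_{g_n^{-1} g_{n-1}^{-1} ⋯ g_2^{-1} g_1^{-1}}. -/
/-- The defining relations of Exel's semigroup `S(G)` of a group `G`:
`[1] = 1`, `[s⁻¹][s][t] = [s⁻¹][st]`, `[s][t][t⁻¹] = [st][t⁻¹]`. -/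
inductive ExelRel (G : Type*) [Group G] : FreeMonoid G → FreeMonoid G → Prop
  | one : ExelRel G (FreeMonoid.of 1) 1
  | left (s t : G) : ExelRel G
      (FreeMonoid.of s⁻¹ * FreeMonoid.of s * FreeMonoid.of t)
      (FreeMonoid.of s⁻¹ * FreeMonoid.of (s * t))
  | right (s t : G) : ExelRel G
      (FreeMonoid.of s * FreeMonoid.of t * FreeMonoid.of t⁻¹)
      (FreeMonoid.of (s * t) * FreeMonoid.of t⁻¹)

/-- The congruence on the free monoid on `G` generated by the Exel relations. -/
def ExelCon (G : Type*) [Group G] : Con (FreeMonoid G) := conGen (ExelRel G)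

/-- Exel's semigroup (an inverse monoid) `S(G)` of the group `G`. -/
abbrev ExelMonoid (G : Type*) [Group G] := (ExelCon G).Quotient

/-- The canonical generator `[g]` of `S(G)`. -/
def ExelMonoid.of {G : Type*} [Group G] (g : G) : ExelMonoid G :=
  (ExelCon G).mk' (FreeMonoid.of g)

/-- The idempotent `e_g := [g][g⁻¹]` in `S(G)`. -/
def ExelMonoid.e {G : Type*} [Group G] (g : G) : ExelMonoid G :=
  ExelMonoid.of g * ExelMonoid.of g⁻¹

/-- The partial group algebra `K_par G`: the semigroup `K`-algebra of Exel's semigroup. -/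
abbrev KparG (K G : Type*) [CommRing K] [Group G] := MonoidAlgebra K (ExelMonoid G)

/-- The canonical generator `[g]` of `K_par G`. -/
noncomputable def pr (K : Type*) {G : Type*} [CommRing K] [Group G] (g : G) : KparG K G :=
  MonoidAlgebra.of K (ExelMonoid G) (ExelMonoid.of g)

/-- The idempotent `e_g := [g][g⁻¹]` in `K_par G`. -/
noncomputable def eK (K : Type*) {G : Type*} [CommRing K] [Group G] (g : G) : KparG K G :=
  pr K g * pr K g⁻¹

namespace ExelMonoid
variable {G : Type*} [Group G]

lemma rel_left (s t : G) :
    of s⁻¹ * of s * of t = of s⁻¹ * of (s * t) := by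
  simp only [of, ← map_mul]
  exact (Con.eq _).mpr (ConGen.Rel.of _ _ (ExelRel.left s t))

lemma rel_right (s t : G) :
    of s * of t * of t⁻¹ = of (s * t) * of t⁻¹ := by
  simp only [of, ← map_mul]
  exact (Con.eq _).mpr (ConGen.Rel.of _ _ (ExelRel.right s t))

lemma of_mul_e (s g : G) : of s * e g = e (s * g) * of s := by
  have h1 : of s * e g = of (s * g) * of g⁻¹ := by
    rw [e, ← mul_assoc, rel_right s g]
  have h2 : e (s * g) * of s = of (s * g) * of g⁻¹ := by
    have : of (s * g) * of (s * g)⁻¹ * of s = of (s * g) * of ((s * g)⁻¹ * s) := by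
      have := rel_left (s * g)⁻¹ s
      rwa [inv_inv] at this
    rw [e, this, mul_inv_rev]
    congr 2
    group
  rw [h1, h2]

lemma e_mul_of (g s : G) : e g * of s = of s * e (s⁻¹ * g) := by
  have := of_mul_e s (s⁻¹ * g)
  rwa [mul_inv_cancel_left, eq_comm] at this

lemma e_mul_prod (l : List G) (g : G) :
    e g * (l.map of).prod = (l.map of).prod * e (l.prod⁻¹ * g) := by
  induction l generalizing g with
  | nil => simp
  | cons h t ih =>
      simp only [List.map_cons, List.prod_cons, ← mul_assoc, e_mul_of g h]
      rw [mul_assoc (of h), ih]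
      simp [mul_inv_rev, mul_assoc]

lemma eps_formula (l : List G) :
    (l.reverse.map fun g => of g⁻¹).prod * (l.map fun g => of g).prod =
      ((List.range l.length).reverse.map fun i => e ((l.drop i).prod)⁻¹).prod := by
  induction l with
  | nil => simp
  | cons g t ih =>
      have hL : ((g :: t).reverse.map fun x => of x⁻¹).prod
          = (t.reverse.map fun x => of x⁻¹).prod * of g⁻¹ := by
        simp
      have key : (t.reverse.map fun x => of x⁻¹).prod * of g⁻¹ *
            ((g :: t).map fun x => of x).prod
          = ((t.reverse.map fun x => of x⁻¹).prod * (t.map fun x => of x).prod) *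
            e ((g :: t).prod)⁻¹ := by
        simp only [List.map_cons, List.prod_cons]
        have hge : of g⁻¹ * of g = e g⁻¹ := by rw [e, inv_inv]
        rw [mul_assoc, ← mul_assoc (of g⁻¹), hge, e_mul_prod]
        simp only [List.prod_cons, mul_inv_rev, ← mul_assoc]
      have hr : (List.range (g :: t).length).reverse
          = ((List.range t.length).map (· + 1)).reverse ++ [0] := by
        rw [List.length_cons, List.range_succ_eq_map]
        simp
      rw [hL, key, ih, hr]
      simp only [List.map_append, List.prod_append, List.map_reverse, List.map_map,
        Function.comp, List.drop_succ_cons, List.drop_zero, List.map_cons, List.map_nil,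
        List.prod_cons, List.prod_nil, mul_one]
      simp [Function.comp_def]

end ExelMonoid

/-- In `K_par G`, for all `g_1, …, g_n ∈ G` one has
`[g_n⁻¹]⋯[g_2⁻¹][g_1⁻¹][g_1][g_2]⋯[g_n]
  = e_{g_n⁻¹} e_{g_n⁻¹g_{n-1}⁻¹} ⋯ e_{g_n⁻¹g_{n-1}⁻¹⋯g_2⁻¹g_1⁻¹}`. -/

theorem kpar_eps_formula (K : Type*) {G : Type*} [CommRing K] [Group G] (l : List G) :
    (l.reverse.map fun g => pr K g⁻¹).prod * (l.map fun g => pr K g).prod =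
      ((List.range l.length).reverse.map fun i => eK K ((l.drop i).prod)⁻¹).prod := by
  have h := congrArg (MonoidAlgebra.of K (ExelMonoid G)) (ExelMonoid.eps_formula l)
  rw [map_mul, map_list_prod, map_list_prod, map_list_prod, List.map_map, List.map_map,
    List.map_map] at h
  simpa [Function.comp_def, pr, eK, ExelMonoid.e, map_mul] using h
end

section
/- If M is a left K_par G-module with induced partial action α, then the canonical map ι: M → KG ⊗_{G_par} M, m ↦ 1 ⊗_{G_par} m, is injective, and the universal global action on KG ⊗_{G_par} M is a globalization of α. -/
open TensorProduct

/-- The group algebra `KG`. -/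
abbrev KG (K G : Type*) [CommRing K] [Group G] := MonoidAlgebra K G

/-- The relation `KG`-submodule of `KG ⊗[K] M` defining `KG ⊗_{G_par} M` for a left
`K_par G`-module `M` with its induced partial action:
generated by the elements `g ⊗ [h]·m − gh ⊗ e_{h⁻¹}·m`. -/
noncomputable def glueRel (K G M : Type*) [CommRing K] [Group G]
    [AddCommGroup M] [Module K M] [Module (KparG K G) M] [IsScalarTower K (KparG K G) M] :
    Submodule (KG K G) (KG K G ⊗[K] M) :=
  Submodule.span (KG K G) {w : KG K G ⊗[K] M | ∃ (g h : G) (m : M),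
    w = MonoidAlgebra.of K G g ⊗ₜ[K] (pr K h • m) -
      MonoidAlgebra.of K G (g * h) ⊗ₜ[K] (eK K h⁻¹ • m)}

/-- The universal globalization `Λ(M) = KG ⊗_{G_par} M` of a left `K_par G`-module `M`. -/
noncomputable abbrev Glob (K G M : Type*) [CommRing K] [Group G]
    [AddCommGroup M] [Module K M] [Module (KparG K G) M] [IsScalarTower K (KparG K G) M] :=
  KG K G ⊗[K] M ⧸ glueRel K G M

/-!
The `K`-linear map `KG → K_par G`, `g ↦ [g]`, is not multiplicative, but the identity
`[f][h] = [fh][h⁻¹][h]` in `S(G)` shows that `a ⊗ m ↦ [a]·m` kills `a·(g ⊗ [h]m − gh ⊗ e_{h⁻¹}m)`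
for every `a ∈ KG`. Hence it descends to a retraction of `ι`, which gives injectivity, and applied
to `g ⊗ m = 1 ⊗ m'` it yields `m' = [g]m ∈ e_g·M`.
-/

theorem MonoidAlgebra.span_of_tmul_eq_top (K G M : Type*) [CommRing K] [Monoid G]
    [AddCommGroup M] [Module K M] :
    Submodule.span K {t : MonoidAlgebra K G ⊗[K] M | ∃ (g : G) (m : M),
      t = MonoidAlgebra.of K G g ⊗ₜ m} = ⊤ := by
  have hbasis : ⇑(MonoidAlgebra.basis G K) = MonoidAlgebra.of K G :=
    funext fun g => MonoidAlgebra.basis_apply K g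
  have hset : {t : MonoidAlgebra K G ⊗[K] M | ∃ (g : G) (m : M),
      t = MonoidAlgebra.of K G g ⊗ₜ m} =
      Set.image2 (fun a m => TensorProduct.mk K _ M a m) (Set.range (MonoidAlgebra.of K G))
        Set.univ := by
    ext t
    simp [eq_comm]
  rw [hset, ← Submodule.map₂_span_span, ← hbasis, (MonoidAlgebra.basis G K).span_eq,
    Submodule.span_univ, TensorProduct.map₂_mk_top_top_eq_top]

namespace ExelMonoid

variable {G : Type*} [Group G]

theorem of_one : ExelMonoid.of (1 : G) = 1 :=
  (Con.eq _).mpr (ConGen.Rel.of _ _ ExelRel.one)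

theorem of_mul_of_mul_of_inv (s t : G) :
    ExelMonoid.of s * ExelMonoid.of t * ExelMonoid.of t⁻¹ =
      ExelMonoid.of (s * t) * ExelMonoid.of t⁻¹ :=
  (Con.eq _).mpr (ConGen.Rel.of _ _ (ExelRel.right s t))

theorem of_mul_of_inv_mul_of (t : G) :
    ExelMonoid.of t * ExelMonoid.of t⁻¹ * ExelMonoid.of t = ExelMonoid.of t := by
  simpa [of_one] using of_mul_of_mul_of_inv t t⁻¹

theorem of_mul_of (f h : G) :
    ExelMonoid.of f * ExelMonoid.of h =
      ExelMonoid.of (f * h) * ExelMonoid.of h⁻¹ * ExelMonoid.of h := by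
  conv_lhs => rw [← of_mul_of_inv_mul_of h, ← mul_assoc, ← mul_assoc, of_mul_of_mul_of_inv]

end ExelMonoid

section PartialGroupAlgebra

variable (K : Type*) {G : Type*} [CommRing K] [Group G]

theorem pr_one : pr K (1 : G) = 1 := by
  rw [pr, ExelMonoid.of_one, map_one]

theorem pr_mul_pr (f h : G) : pr K f * pr K h = pr K (f * h) * eK K h⁻¹ := by
  simp only [pr, eK, inv_inv, ← mul_assoc, ← map_mul, ExelMonoid.of_mul_of f h]

theorem eK_mul_pr (g : G) : eK K g * pr K g = pr K g := by
  simp only [pr, eK, ← map_mul, ExelMonoid.of_mul_of_inv_mul_of]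

variable (G) in
noncomputable def prLinear : KG K G →ₗ[K] KparG K G :=
  MonoidAlgebra.mapDomainLinearMap K K ExelMonoid.of

@[simp]
theorem prLinear_of (g : G) : prLinear K G (MonoidAlgebra.of K G g) = pr K g :=
  MonoidAlgebra.mapDomainLinearMap_single _ _ _

@[simp]
theorem prLinear_one : prLinear K G 1 = 1 := by
  rw [← map_one (MonoidAlgebra.of K G), prLinear_of, pr_one]

variable {M : Type*} [AddCommGroup M] [Module K M] [Module (KparG K G) M]
  [IsScalarTower K (KparG K G) M]

theorem prLinear_smul_pr_smul (a : KG K G) (h : G) (m : M) :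
    prLinear K G a • pr K h • m =
      prLinear K G (a * MonoidAlgebra.of K G h) • eK K h⁻¹ • m := by
  induction a using MonoidAlgebra.induction_on with
  | of g => rw [smul_smul, smul_smul, ← map_mul, prLinear_of, prLinear_of, pr_mul_pr]
  | add a b ha hb => rw [add_mul, map_add, map_add, add_smul, add_smul, ha, hb]
  | smul r a ha => rw [smul_mul_assoc, map_smul, map_smul, smul_assoc, smul_assoc, ha]

end PartialGroupAlgebra

section Retraction

variable (K G M : Type*) [CommRing K] [Group G] [AddCommGroup M] [Module K M]
  [Module (KparG K G) M] [IsScalarTower K (KparG K G) M]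

noncomputable def tensorRetraction : KG K G ⊗[K] M →ₗ[K] M :=
  TensorProduct.lift ((Algebra.lsmul K K M).toLinearMap ∘ₗ prLinear K G)

variable {K G M}

@[simp]
theorem tensorRetraction_tmul (a : KG K G) (m : M) :
    tensorRetraction K G M (a ⊗ₜ m) = prLinear K G a • m :=
  rfl

theorem tensorRetraction_smul_eq_zero {w : KG K G ⊗[K] M} (hw : w ∈ glueRel K G M)
    (a : KG K G) : tensorRetraction K G M (a • w) = 0 := by
  induction hw using Submodule.span_induction generalizing a with
  | mem x hx =>
    obtain ⟨g, h, m, rfl⟩ := hx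
    rw [smul_sub, smul_tmul', smul_tmul', map_sub, tensorRetraction_tmul, tensorRetraction_tmul,
      smul_eq_mul, smul_eq_mul, map_mul (MonoidAlgebra.of K G), ← mul_assoc,
      prLinear_smul_pr_smul, sub_self]
  | zero => rw [smul_zero, map_zero]
  | add x y _ _ hx hy => rw [smul_add, map_add, hx, hy, add_zero]
  | smul b x _ hx => rw [smul_smul, hx]

theorem tensorRetraction_eq_of_mk_eq {x y : KG K G ⊗[K] M}
    (h : (Submodule.Quotient.mk x : Glob K G M) = Submodule.Quotient.mk y) :
    tensorRetraction K G M x = tensorRetraction K G M y := by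
  rw [← sub_eq_zero, ← map_sub, ← one_smul (KG K G) (x - y)]
  exact tensorRetraction_smul_eq_zero ((Submodule.Quotient.eq _).mp h) 1

end Retraction

section Globalization

variable {K G M : Type*} [CommRing K] [Group G] [AddCommGroup M] [Module K M]
  [Module (KparG K G) M] [IsScalarTower K (KparG K G) M]

theorem Glob.mk_one_tmul_injective :
    Function.Injective fun m : M => (Submodule.Quotient.mk ((1 : KG K G) ⊗ₜ[K] m) : Glob K G M) :=
  fun m m' h => by
    simpa only [tensorRetraction_tmul, prLinear_one, one_smul] using tensorRetraction_eq_of_mk_eq h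

theorem Glob.mk_of_tmul_eK_inv_smul (g : G) (m : M) :
    (Submodule.Quotient.mk (MonoidAlgebra.of K G g ⊗ₜ[K] (eK K g⁻¹ • m)) : Glob K G M) =
      Submodule.Quotient.mk ((1 : KG K G) ⊗ₜ[K] (pr K g • m)) := by
  refine ((Submodule.Quotient.eq _).mpr ?_).symm
  exact Submodule.subset_span ⟨1, g, m, by rw [map_one, one_mul]⟩

theorem Glob.mk_of_tmul_eq_mk_one_tmul {g : G} {m m' : M}
    (h : (Submodule.Quotient.mk (MonoidAlgebra.of K G g ⊗ₜ[K] m) : Glob K G M) =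
      Submodule.Quotient.mk ((1 : KG K G) ⊗ₜ[K] m')) :
    pr K g • m = m' := by
  simpa only [tensorRetraction_tmul, prLinear_of, prLinear_one, one_smul] using
    tensorRetraction_eq_of_mk_eq h

theorem Glob.span_mk_of_tmul_eq_top :
    Submodule.span K {w : Glob K G M | ∃ (g : G) (m : M),
      w = Submodule.Quotient.mk (MonoidAlgebra.of K G g ⊗ₜ[K] m)} = ⊤ := by
  let π := (glueRel K G M).mkQ.restrictScalars K
  have hset : {w : Glob K G M | ∃ (g : G) (m : M),
      w = Submodule.Quotient.mk (MonoidAlgebra.of K G g ⊗ₜ[K] m)} =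
      π '' {t | ∃ (g : G) (m : M), t = MonoidAlgebra.of K G g ⊗ₜ m} := by
    ext w
    constructor
    · rintro ⟨g, m, rfl⟩
      exact ⟨_, ⟨g, m, rfl⟩, rfl⟩
    · rintro ⟨_, ⟨g, m, rfl⟩, rfl⟩
      exact ⟨g, m, rfl⟩
  rw [hset, Submodule.span_image, MonoidAlgebra.span_of_tmul_eq_top, Submodule.map_top,
    LinearMap.range_eq_top]
  exact Submodule.Quotient.mk_surjective _

theorem Glob.range_mk_of_tmul_inter_range_mk_one_tmul (g : G) :
    (Set.range fun m : M =>
        (Submodule.Quotient.mk (MonoidAlgebra.of K G g ⊗ₜ[K] m) : Glob K G M)) ∩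
      Set.range (fun m : M => (Submodule.Quotient.mk ((1 : KG K G) ⊗ₜ[K] m) : Glob K G M)) =
    Set.range fun m : M =>
      (Submodule.Quotient.mk ((1 : KG K G) ⊗ₜ[K] (eK K g • m)) : Glob K G M) := by
  ext x
  constructor
  · rintro ⟨⟨m, rfl⟩, m', hm'⟩
    refine ⟨pr K g • m, ?_⟩
    dsimp only at hm' ⊢
    rw [smul_smul, eK_mul_pr, Glob.mk_of_tmul_eq_mk_one_tmul hm'.symm, hm']
  · rintro ⟨m, rfl⟩
    refine ⟨⟨eK K g⁻¹ • pr K g⁻¹ • m, ?_⟩, eK K g • m, rfl⟩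
    dsimp only
    rw [Glob.mk_of_tmul_eK_inv_smul, smul_smul, eK]

end Globalization

/-- If `M` is a left `K_par G`-module with induced partial action `α` (`M_g = e_g·M`,
`α_g = [g]·-`), then the canonical map `ι : M → KG ⊗_{G_par} M`, `m ↦ 1 ⊗ m`, is
injective, and the universal global action on `KG ⊗_{G_par} M` is a globalization of `α`:
`ι` intertwines `α` with the `G`-action, `ι(M_g) = g·ι(M) ∩ ι(M)` for all `g`, and
`KG ⊗_{G_par} M = Σ_{g ∈ G} g·ι(M)`. -/
theorem glob_is_globalization (K G M : Type*) [CommRing K] [Group G]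
    [AddCommGroup M] [Module K M] [Module (KparG K G) M] [IsScalarTower K (KparG K G) M] :
    let ι : M → Glob K G M :=
      fun m => Submodule.Quotient.mk ((1 : KG K G) ⊗ₜ[K] m)
    Function.Injective ι ∧
      (∀ (g : G) (m : M),
        Submodule.Quotient.mk (MonoidAlgebra.of K G g ⊗ₜ[K] (eK K g⁻¹ • m)) =
          ι (pr K g • m)) ∧
      (∀ g : G,
        (Set.range fun m : M =>
            (Submodule.Quotient.mk (MonoidAlgebra.of K G g ⊗ₜ[K] m) : Glob K G M)) ∩
          Set.range ι = Set.range fun m : M => ι (eK K g • m)) ∧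
      Submodule.span K {w : Glob K G M | ∃ (g : G) (m : M),
        w = Submodule.Quotient.mk (MonoidAlgebra.of K G g ⊗ₜ[K] m)} = ⊤ :=
  ⟨Glob.mk_one_tmul_injective, Glob.mk_of_tmul_eK_inv_smul,
    Glob.range_mk_of_tmul_inter_range_mk_one_tmul, Glob.span_mk_of_tmul_eq_top⟩
end
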